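/- For any connected graph G of order n, α_bn(G) ≤ n − δ(G). -/

import Mathlib

/-!
Fix a boundary independent broadcast `f` and a broadcasting vertex `v₀`. Give every other
broadcasting vertex `v` the open ball of radius `f v` around it, and `v₀` the open ball of radius
`f v₀ + 1`; boundary independence makes these balls pairwise disjoint. A geodesic from `v` to an
eccentric vertex meets every distance up to `e(v) ≥ f v`, so the ball of `v` has at least `f v`
vertices, and the ball of `v₀` has at least `f v₀ + deg v₀`: the neighbours of `v₀` all sit at
distance `1`, while the other vertices of the ball still realise the `f v₀` distances `≠ 1`.
Summing, `σ(f) + δ(G) ≤ n`.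
-/

open SimpleGraph Finset

/-- The eccentricity of a vertex: the maximum distance to any other vertex. -/
noncomputable def ecc {V : Type*} [Fintype V] (G : SimpleGraph V) (v : V) : ℕ :=
  Finset.univ.sup fun u => G.dist v u

/-- A broadcast: each vertex broadcasts with strength at most its eccentricity. -/
def IsBroadcast {V : Type*} [Fintype V] (G : SimpleGraph V) (f : V → ℕ) : Prop :=
  ∀ v, f v ≤ ecc G v

/-- A boundary independent broadcast. -/
def IsBnIndep {V : Type*} [Fintype V] (G : SimpleGraph V) (f : V → ℕ) : Prop :=
  IsBroadcast G f ∧ ∀ u v, u ≠ v → 1 ≤ f u → 1 ≤ f v → f u + f v ≤ G.dist u v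

/-- The maximum cost of a boundary independent broadcast. -/
noncomputable def alphaBn {V : Type*} [Fintype V] (G : SimpleGraph V) : ℕ :=
  sSup {k | ∃ f : V → ℕ, IsBnIndep G f ∧ ∑ v, f v = k}

/-- The independence number. -/
noncomputable def indepNum {V : Type*} [Fintype V] (G : SimpleGraph V) : ℕ :=
  sSup {k | ∃ s : Finset V, (∀ u ∈ s, ∀ v ∈ s, u ≠ v → ¬ G.Adj u v) ∧ s.card = k}

section

variable {V : Type*} {G : SimpleGraph V}

lemma SimpleGraph.exists_dist_eq_of_le_dist {u w : V} {i : ℕ} (hi : i ≤ G.dist u w) :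
    ∃ x, G.dist u x = i := by
  obtain rfl | hi0 := Nat.eq_zero_or_pos i
  · exact ⟨u, G.dist_self⟩
  have hreach : G.Reachable u w := Reachable.of_dist_ne_zero (by omega)
  obtain ⟨p, hp⟩ := hreach.exists_walk_length_eq_dist
  refine ⟨p.getVert i, ?_⟩
  rw [← length_eq_dist_of_subwalk hp (p.isSubwalk_take i), Walk.take_length]
  omega

section Fintype

variable [Fintype V]

lemma exists_dist_eq_of_le_ecc {v : V} {i : ℕ} (hi : i ≤ ecc G v) : ∃ x, G.dist v x = i := by
  obtain ⟨w, -, hw⟩ := exists_mem_eq_sup univ ⟨v, mem_univ v⟩ (G.dist v)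
  exact exists_dist_eq_of_le_dist (hi.trans_eq hw)

lemma card_le_card_filter_dist_mem {v : V} {s : Finset ℕ} (hs : ∀ i ∈ s, i ≤ ecc G v) :
    #s ≤ #{x | G.dist v x ∈ s} :=
  card_le_card_of_surjOn (G.dist v) fun i hi ↦ by
    obtain ⟨x, hx⟩ := exists_dist_eq_of_le_ecc (hs i hi)
    exact ⟨x, by simpa [hx] using hi, hx⟩

noncomputable def distBall (G : SimpleGraph V) (v : V) (r : ℕ) : Finset V := {x | G.dist v x < r}

lemma le_card_distBall {v : V} {r : ℕ} (hr : r ≤ ecc G v + 1) : r ≤ #(distBall G v r) := by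
  simpa [distBall] using card_le_card_filter_dist_mem (s := range r) (by simp only [mem_range]; omega)

lemma degree_add_le_card_distBall [DecidableRel G.Adj] {v : V} {r : ℕ} (hr₀ : 1 ≤ r)
    (hr : r ≤ ecc G v) : G.degree v + r ≤ #(distBall G v (r + 1)) := by
  classical
  set far : Finset V := {x | G.dist v x ∈ (range (r + 1)).erase 1}
  have hfar : r ≤ #far := by
    have := card_le_card_filter_dist_mem (G := G) (v := v) (s := (range (r + 1)).erase 1)
      (by simp only [mem_erase, mem_range]; omega)
    rwa [card_erase_of_mem (by simp; omega), card_range, Nat.add_sub_cancel] at this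
  have hdisj : Disjoint (G.neighborFinset v) far := by
    refine Finset.disjoint_left.mpr fun x hx hfar ↦ ?_
    simp only [far, mem_filter_univ, mem_erase] at hfar
    exact hfar.1 (dist_eq_one_iff_adj.mpr ((mem_neighborFinset G v x).mp hx))
  have hsub : G.neighborFinset v ∪ far ⊆ distBall G v (r + 1) := by
    intro x
    simp only [mem_union, mem_neighborFinset, distBall, far, mem_filter_univ, mem_erase, mem_range]
    rintro (hx | hx)
    · rw [dist_eq_one_iff_adj.mpr hx]; omega
    · exact hx.2
  calc G.degree v + r ≤ #(G.neighborFinset v ∪ far) := by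
        rw [card_union_of_disjoint hdisj, card_neighborFinset_eq_degree]; omega
    _ ≤ _ := card_le_card hsub

lemma disjoint_distBall (hG : G.Connected) {u v : V} {a b : ℕ} (h : a + b ≤ G.dist u v + 1) :
    Disjoint (distBall G u a) (distBall G v b) := by
  refine Finset.disjoint_left.mpr fun x hxu hxv ↦ ?_
  simp only [distBall, mem_filter_univ] at hxu hxv
  have := hG.dist_triangle (u := u) (v := x) (w := v)
  rw [G.dist_comm (u := x)] at this
  omega

lemma IsBnIndep.pairwiseDisjoint_distBall [DecidableEq V] (hG : G.Connected) {f : V → ℕ}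
    (hf : IsBnIndep G f) (v₀ : V) :
    (Function.support f).PairwiseDisjoint
      fun v ↦ distBall G v (f v + if v = v₀ then 1 else 0) := by
  intro u hu v hv huv
  have hfuv := hf.2 u v huv (Nat.one_le_iff_ne_zero.mpr hu) (Nat.one_le_iff_ne_zero.mpr hv)
  apply disjoint_distBall hG
  split_ifs with hu₀ hv₀
  · exact absurd (hu₀.trans hv₀.symm) huv
  all_goals omega

lemma IsBnIndep.sum_add_degree_le_card [DecidableRel G.Adj] (hG : G.Connected) {f : V → ℕ}
    (hf : IsBnIndep G f) {v₀ : V} (hv₀ : f v₀ ≠ 0) :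
    ∑ v, f v + G.degree v₀ ≤ Fintype.card V := by
  classical
  set T : Finset V := {v | f v ≠ 0}
  set ball : V → Finset V := fun v ↦ distBall G v (f v + if v = v₀ then 1 else 0)
  have hdisj : (T : Set V).PairwiseDisjoint ball :=
    (hf.pairwiseDisjoint_distBall hG v₀).subset fun v hv ↦ by simpa [T] using hv
  have hball : ∀ v ∈ T, f v + (if v = v₀ then G.degree v₀ else 0) ≤ #(ball v) := by
    intro v hv
    have hv' : f v ≠ 0 := by simpa [T] using hv
    split_ifs with h
    · subst h
      simpa [ball, add_comm] using degree_add_le_card_distBall (G := G) (v := v)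
        (Nat.one_le_iff_ne_zero.mpr hv') (hf.1 v)
    · simpa [ball, h] using le_card_distBall (G := G) (v := v) (by have := hf.1 v; omega)
  calc ∑ v, f v + G.degree v₀ = ∑ v ∈ T, (f v + if v = v₀ then G.degree v₀ else 0) := by
        rw [sum_add_distrib, sum_filter_ne_zero, sum_ite_eq' T v₀, if_pos (by simpa [T])]
    _ ≤ ∑ v ∈ T, #(ball v) := sum_le_sum hball
    _ = #(T.biUnion ball) := (card_biUnion hdisj).symm
    _ ≤ Fintype.card V := card_le_univ _

end Fintype

end

theorem alphaBn_le_order_sub_minDegree {V : Type*} [Fintype V]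
    (G : SimpleGraph V) [DecidableRel G.Adj] (hG : G.Connected) :
    alphaBn G ≤ Fintype.card V - G.minDegree := by
  refine csSup_le ⟨0, fun _ ↦ 0, ⟨fun _ ↦ Nat.zero_le _, fun _ _ _ h ↦ by simp at h⟩, by simp⟩ ?_
  rintro k ⟨f, hf, rfl⟩
  by_cases hf₀ : f = 0
  · simp [hf₀]
  obtain ⟨v₀, hv₀⟩ := Function.ne_iff.mp hf₀
  have := hf.sum_add_degree_le_card hG hv₀
  have := G.minDegree_le_degree v₀
  omega
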